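/- arXiv:1909.03304 — 5 statements merged into one kernel-verified Lean document; each statement's English description precedes it below -/
import Mathlib

section
/- For any smooth path of length d and width w with curvature everywhere at most 2/w, the swept coverage area equals d·w, the same as a straight path of length d and width w. -/
open MeasureTheory RealInnerProductSpace
open scoped ContDiff

set_option maxHeartbeats 2000000 in
/-- For a smooth unit-speed path `P` of length `d` and width `w` with
curvature everywhere at most `2/w`, the swept coverage area (the image of the map
sending arc length `s` and offset `u ∈ [-w/2, w/2]` to `P s + u • N s`, where `N` is
the unit normal) has measure `d * w`, the same as a straight path of length `d` and
width `w`.  (The curvature bound ensures the sweep map is injective.) -/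
theorem curvature_constrained_path_swept_area
    (d w : ℝ) (hd : 0 < d) (hw : 0 < w)
    (P N : ℝ → EuclideanSpace ℝ (Fin 2))
    (hP : ContDiff ℝ (⊤ : ℕ∞) P)
    (hunit : ∀ s, ‖deriv P s‖ = 1)
    (hN : ∀ s, ‖N s‖ = 1 ∧ inner ℝ (deriv P s) (N s) = (0 : ℝ))
    (hcurv : ∀ s, ‖deriv (deriv P) s‖ ≤ 2 / w)
    (F : ℝ × ℝ → EuclideanSpace ℝ (Fin 2))
    (hF : ∀ p : ℝ × ℝ, F p = P p.1 + p.2 • N p.1)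
    (hinj : Set.InjOn F (Set.Icc 0 d ×ˢ Set.Icc (-(w / 2)) (w / 2))) :
    volume (F '' (Set.Icc 0 d ×ˢ Set.Icc (-(w / 2)) (w / 2)))
      = ENNReal.ofReal (d * w) := by
  set S : Set (ℝ × ℝ) := Set.Icc 0 d ×ˢ Set.Icc (-(w / 2)) (w / 2) with hS
  have hPdiff : Differentiable ℝ P := hP.differentiable (by simp)
  have hP' : ContDiff ℝ ∞ (deriv P) := (contDiff_infty_iff_deriv.mp (hP.of_le (by simp))).2
  have hP'diff : Differentiable ℝ (deriv P) := hP'.differentiable (by simp)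
  have hP'' : Continuous (deriv (deriv P)) := (contDiff_infty_iff_deriv.mp hP').2.continuous
  -- coordinate functions and their derivatives
  set da : ℝ → ℝ := fun s => deriv P s 0 with hda_def
  set db : ℝ → ℝ := fun s => deriv P s 1 with hdb_def
  set dda : ℝ → ℝ := fun s => deriv (deriv P) s 0 with hdda_def
  set ddb : ℝ → ℝ := fun s => deriv (deriv P) s 1 with hddb_def
  have hcoord : ∀ (f : ℝ → EuclideanSpace ℝ (Fin 2)), Differentiable ℝ f → ∀ (i : Fin 2) (s : ℝ),
      HasDerivAt (fun t => f t i) (deriv f s i) s := by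
    intro f hf i s
    exact
      (EuclideanSpace.proj i).hasFDerivAt.comp_hasDerivAt s (hf s).hasDerivAt
  have ha : ∀ s, HasDerivAt (fun t => P t 0) (da s) s := hcoord P hPdiff 0
  have hb : ∀ s, HasDerivAt (fun t => P t 1) (db s) s := hcoord P hPdiff 1
  have hda : ∀ s, HasDerivAt da (dda s) s := hcoord (deriv P) hP'diff 0
  have hdb : ∀ s, HasDerivAt db (ddb s) s := hcoord (deriv P) hP'diff 1
  have hda_cont : Continuous da := ((EuclideanSpace.proj (0:Fin 2)).continuous.comp hP'.continuous :)
  have hdb_cont : Continuous db := ((EuclideanSpace.proj (1:Fin 2)).continuous.comp hP'.continuous :)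
  have hdda_cont : Continuous dda := ((EuclideanSpace.proj (0:Fin 2)).continuous.comp hP'' :)
  have hddb_cont : Continuous ddb := ((EuclideanSpace.proj (1:Fin 2)).continuous.comp hP'' :)
  -- unit speed in coordinates
  have hspeed : ∀ s, da s * da s + db s * db s = 1 := by
    intro s
    have h2 := real_inner_self_eq_norm_sq (deriv P s)
    rw [hunit s, PiLp.inner_apply, Fin.sum_univ_two, Real.inner_apply, Real.inner_apply] at h2
    simpa [PiLp.inner_apply, Fin.sum_univ_two] using h2
  -- curvature in coordinates
  set k : ℝ → ℝ := fun s => da s * ddb s - db s * dda s with hk_def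
  have hk_cont : Continuous k := ((hda_cont.mul hddb_cont).sub (hdb_cont.mul hdda_cont))
  have hkbound : ∀ s, |k s| ≤ 2 / w := by
    intro s
    have h1 : ‖deriv (deriv P) s‖ ^ 2 = dda s * dda s + ddb s * ddb s := by
      have := real_inner_self_eq_norm_sq (deriv (deriv P) s)
      rw [PiLp.inner_apply, Fin.sum_univ_two, Real.inner_apply, Real.inner_apply] at this
      simpa [PiLp.inner_apply, Fin.sum_univ_two] using this.symm
    have h2 : ‖deriv (deriv P) s‖ ≤ 2 / w := hcurv s
    have h3 : (0:ℝ) ≤ ‖deriv (deriv P) s‖ := norm_nonneg _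
    have h4 : k s ^ 2 ≤ (2 / w) ^ 2 := by
      have hs := hspeed s
      nlinarith [sq_nonneg (da s * dda s + db s * ddb s), sq_nonneg (k s)]
    have h5 : (0:ℝ) < 2 / w := by positivity
    calc |k s| = Real.sqrt (k s ^ 2) := (Real.sqrt_sq_eq_abs _).symm
      _ ≤ Real.sqrt ((2/w)^2) := Real.sqrt_le_sqrt h4
      _ = 2 / w := by rw [Real.sqrt_sq h5.le]
  -- the sign function relating N to the canonical normal (db, -da)
  set eps : ℝ → ℝ := fun s => db s * N s 0 - da s * N s 1 with heps_def
  have hNcoord : ∀ s, N s 0 = eps s * db s ∧ N s 1 = -(eps s * da s) ∧ eps s * eps s = 1 := by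
    intro s
    obtain ⟨hN1, hN2⟩ := hN s
    have hx : N s 0 * N s 0 + N s 1 * N s 1 = 1 := by
      have h2 := real_inner_self_eq_norm_sq (N s)
      rw [hN1, PiLp.inner_apply, Fin.sum_univ_two, Real.inner_apply, Real.inner_apply] at h2
      simpa [PiLp.inner_apply, Fin.sum_univ_two] using h2
    have ho : da s * N s 0 + db s * N s 1 = 0 := by
      simpa [PiLp.inner_apply, Fin.sum_univ_two, hda_def, hdb_def, mul_comm] using hN2
    have hs := hspeed s
    refine ⟨?_, ?_, ?_⟩ <;> simp only [heps_def]
    · linear_combination (-(N s 0)) * hs + da s * ho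
    · linear_combination (-(N s 1)) * hs + db s * ho
    · linear_combination (N s 0 * N s 0 + N s 1 * N s 1) * hs + hx
        - (da s * N s 0 + db s * N s 1) * ho
  -- canonical normal
  set m : ℝ → EuclideanSpace ℝ (Fin 2) :=
    fun s => (WithLp.equiv 2 (Fin 2 → ℝ)).symm ![db s, -da s] with hm_def
  have hm0 : ∀ s, m s 0 = db s := fun s => rfl
  have hm1 : ∀ s, m s 1 = -da s := fun s => rfl
  have hNm : ∀ s, N s = eps s • m s := by
    intro s
    obtain ⟨h0, h1, _⟩ := hNcoord s
    ext i
    fin_cases i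
    · show N s 0 = (eps s • m s) 0
      rw [PiLp.smul_apply, hm0, smul_eq_mul]; exact h0
    · show N s 1 = (eps s • m s) 1
      rw [PiLp.smul_apply, hm1, smul_eq_mul, mul_neg]; exact h1
  -- canonical sweep map
  set G : ℝ × ℝ → EuclideanSpace ℝ (Fin 2) := fun q => P q.1 + q.2 • m q.1 with hG_def
  have heps2 : ∀ s, eps s * eps s = 1 := fun s => (hNcoord s).2.2
  have hepsabs : ∀ s, |eps s| = 1 := fun s => by
    have h := heps2 s
    have : |eps s| * |eps s| = 1 := by rw [← abs_mul, h, abs_one]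
    nlinarith [abs_nonneg (eps s)]
  have hepsne : ∀ s, eps s ≠ 0 := by
    intro s h
    have := hepsabs s
    rw [h, abs_zero] at this
    norm_num at this
  have hFG : ∀ s u, F (s, u) = G (s, eps s * u) := by
    intro s u
    rw [hF]
    show P s + u • N s = P s + (eps s * u) • m s
    rw [hNm s, smul_smul, mul_comm]
  have hGF : ∀ s u, G (s, u) = F (s, eps s * u) := by
    intro s u
    rw [hFG s (eps s * u), ← mul_assoc, heps2 s, one_mul]
  have hmem : ∀ s u, u ∈ Set.Icc (-(w/2)) (w/2) → eps s * u ∈ Set.Icc (-(w/2)) (w/2) := by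
    intro s u hu
    have : |eps s * u| ≤ w / 2 := by
      rw [abs_mul, hepsabs s, one_mul]
      exact abs_le.2 ⟨by simpa using hu.1, hu.2⟩
    have h2 := abs_le.1 this
    exact ⟨by linarith [h2.1], h2.2⟩
  have himg : F '' S = G '' S := by
    apply Set.Subset.antisymm
    · rintro _ ⟨⟨s, u⟩, hsu, rfl⟩
      obtain ⟨hs1, hu⟩ := hsu
      exact ⟨(s, eps s * u), ⟨hs1, hmem s u hu⟩, (hFG s u).symm⟩
    · rintro _ ⟨⟨s, u⟩, hsu, rfl⟩
      obtain ⟨hs1, hu⟩ := hsu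
      exact ⟨(s, eps s * u), ⟨hs1, hmem s u hu⟩, (hGF s u).symm⟩
  have hGinj : Set.InjOn G S := by
    intro q hq q' hq' h
    have hq2 : (q.1, eps q.1 * q.2) ∈ S := ⟨hq.1, hmem _ _ hq.2⟩
    have hq'2 : (q'.1, eps q'.1 * q'.2) ∈ S := ⟨hq'.1, hmem _ _ hq'.2⟩
    have hFF : F (q.1, eps q.1 * q.2) = F (q'.1, eps q'.1 * q'.2) := by
      rw [← hGF, ← hGF, Prod.mk.eta, Prod.mk.eta]
      exact h
    have := hinj hq2 hq'2 hFF
    have h1 : q.1 = q'.1 := (Prod.ext_iff.1 this).1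
    have h2 : eps q.1 * q.2 = eps q'.1 * q'.2 := (Prod.ext_iff.1 this).2
    rw [h1] at h2
    have h3 : q.2 = q'.2 := mul_left_cancel₀ (hepsne q'.1) h2
    exact Prod.ext h1 h3
  -- transfer to ℝ × ℝ via a measure-preserving equivalence
  set e : EuclideanSpace ℝ (Fin 2) ≃ᵐ ℝ × ℝ :=
    (MeasurableEquiv.toLp 2 (Fin 2 → ℝ)).symm.trans (MeasurableEquiv.piFinTwo (fun _ => ℝ))
    with he_def
  have he : MeasurePreserving e volume volume :=
    (volume_preserving_piFinTwo _).comp (EuclideanSpace.volume_preserving_symm_measurableEquiv_toLp _)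
  have he_apply : ∀ v : EuclideanSpace ℝ (Fin 2), e v = (v 0, v 1) := fun v => rfl
  set H : ℝ × ℝ → ℝ × ℝ :=
    fun q => (P q.1 0 + q.2 * db q.1, P q.1 1 - q.2 * da q.1) with hH_def
  have heG : ∀ q, e (G q) = H q := by
    intro q
    rw [he_apply]
    have h0 : (G q) 0 = P q.1 0 + q.2 * db q.1 := by
      show (P q.1 + q.2 • m q.1) 0 = _
      rw [PiLp.add_apply, PiLp.smul_apply, hm0, smul_eq_mul]
    have h1 : (G q) 1 = P q.1 1 - q.2 * da q.1 := by
      show (P q.1 + q.2 • m q.1) 1 = _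
      rw [PiLp.add_apply, PiLp.smul_apply, hm1, smul_eq_mul, mul_neg, ← sub_eq_add_neg]
    rw [h0, h1]
  have hvol : volume (G '' S) = volume (H '' S) := by
    have himg2 : e '' (G '' S) = H '' S := by
      rw [← Set.image_comp]
      exact Set.image_congr (fun q _ => heG q)
    have h3 : e '' (G '' S) = e.symm ⁻¹' (G '' S) := e.image_eq_preimage_symm _
    have h4 := (he.symm e).measure_preimage_emb e.symm.measurableEmbedding (G '' S)
    rw [← himg2, h3, h4]
  -- derivative of H
  set B : ℝ × ℝ → ℝ × ℝ →L[ℝ] ℝ × ℝ := fun q =>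
    LinearMap.toContinuousLinearMap (Matrix.toLin (Module.Basis.finTwoProd ℝ) (Module.Basis.finTwoProd ℝ)
      !![da q.1 + q.2 * ddb q.1, db q.1; db q.1 - q.2 * dda q.1, -da q.1]) with hB_def
  have hHderiv : ∀ q : ℝ × ℝ, HasFDerivAt H (B q) q := by
    intro q
    simp only [hH_def, hB_def]
    rw [Matrix.toLin_finTwoProd_toContinuousLinearMap]
    convert HasFDerivAt.prodMk
      (((ha q.1).comp_hasFDerivAt q hasFDerivAt_fst).add
        ((hasFDerivAt_snd).mul ((hdb q.1).comp_hasFDerivAt q hasFDerivAt_fst)))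
      (((hb q.1).comp_hasFDerivAt q hasFDerivAt_fst).sub
        ((hasFDerivAt_snd).mul ((hda q.1).comp_hasFDerivAt q (hasFDerivAt_fst (𝕜 := ℝ) (p := q))))) using 2 <;>
      (ext p <;> simp [smul_smul] <;> ring_nf)
  have hdet : ∀ q : ℝ × ℝ, (B q).det = -(1 + q.2 * k q.1) := by
    intro q
    rw [hB_def]
    simp only [LinearMap.det_toContinuousLinearMap, LinearMap.det_toLin,
      Matrix.det_fin_two_of, hk_def]
    linear_combination (-1 : ℝ) * hspeed q.1
  have hdetpos : ∀ q ∈ S, (0:ℝ) ≤ 1 + q.2 * k q.1 := by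
    intro q hq
    have h1 : |q.2| ≤ w / 2 := abs_le.2 ⟨by simpa using hq.2.1, hq.2.2⟩
    have h2 := hkbound q.1
    have h3 : |q.2 * k q.1| ≤ (w / 2) * (2 / w) := by
      rw [abs_mul]
      exact mul_le_mul h1 h2 (abs_nonneg _) (by linarith [abs_nonneg q.2])
    have h4 : (w / 2) * (2 / w) = 1 := by field_simp
    have h5 := (abs_le.1 (h3.trans_eq h4)).1
    linarith
  have hSmeas : MeasurableSet S := measurableSet_Icc.prod measurableSet_Icc
  have hScomp : IsCompact S := isCompact_Icc.prod isCompact_Icc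
  have hHinj : Set.InjOn H S := fun q hq q' hq' hEq =>
    hGinj hq hq' (e.injective (by rw [heG, heG, hEq]))
  have key := lintegral_abs_det_fderiv_eq_addHaar_image volume hSmeas
      (fun q _ => (hHderiv q).hasFDerivWithinAt) hHinj
  -- compute the integral
  have hf_cont : Continuous (fun q : ℝ × ℝ => 1 + q.2 * k q.1) :=
    continuous_const.add (continuous_snd.mul (hk_cont.comp continuous_fst))
  have hInt : IntegrableOn (fun q : ℝ × ℝ => 1 + q.2 * k q.1) S :=
    hf_cont.continuousOn.integrableOn_compact hScomp
  have hint : (∫⁻ q in S, ENNReal.ofReal |(B q).det|) = ENNReal.ofReal (d * w) := by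
    have h1 : ∀ q ∈ S, ENNReal.ofReal |(B q).det| = ENNReal.ofReal (1 + q.2 * k q.1) := by
      intro q hq
      rw [hdet q, abs_neg, abs_of_nonneg (hdetpos q hq)]
    rw [setLIntegral_congr_fun hSmeas h1]
    rw [← ofReal_integral_eq_lintegral_ofReal hInt
      ((ae_restrict_iff' hSmeas).2 (ae_of_all _ hdetpos))]
    congr 1
    have hInt' : IntegrableOn (fun q : ℝ × ℝ => 1 + q.2 * k q.1)
        (Set.Icc 0 d ×ˢ Set.Icc (-(w / 2)) (w / 2)) (volume.prod volume) := by
      rw [← Measure.volume_eq_prod ℝ ℝ]; exact hInt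
    rw [hS, Measure.volume_eq_prod ℝ ℝ, MeasureTheory.setIntegral_prod _ hInt']
    have hinner : ∀ s, (∫ u in Set.Icc (-(w / 2)) (w / 2), (1 + u * k s)) = w := by
      intro s
      rw [MeasureTheory.integral_Icc_eq_integral_Ioc,
        ← intervalIntegral.integral_of_le (by linarith : -(w/2) ≤ w/2)]
      have hi1 : IntervalIntegrable (fun _ : ℝ => (1:ℝ)) volume (-(w/2)) (w/2) :=
        intervalIntegrable_const
      have hi2 : IntervalIntegrable (fun u : ℝ => u * k s) volume (-(w/2)) (w/2) :=
        (continuous_id.mul continuous_const).intervalIntegrable _ _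
      rw [intervalIntegral.integral_add hi1 hi2, intervalIntegral.integral_const,
        intervalIntegral.integral_mul_const, integral_id]
      simp
    simp_rw [hinner]
    rw [MeasureTheory.setIntegral_const, Real.volume_real_Icc_of_le hd.le]
    simp [smul_eq_mul]
  calc volume (F '' S) = volume (G '' S) := by rw [himg]
    _ = volume (H '' S) := hvol
    _ = ∫⁻ q in S, ENNReal.ofReal |(B q).det| := key.symm
    _ = ENNReal.ofReal (d * w) := hint
end

section
/- For 0 < f < w and r ≥ w/2, the ratio of UAV step distance d_uav = (w − f) + (r + (w−f)/2)·(f/(r + w/2)) to ground vehicle step distance d_gv = r·f/(r + w/2) is at most 2w/f. -/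
/-- For `0 < f < w` and `r ≥ w/2`, the ratio of the UAV step distance
`d_uav = (w - f) + (r + (w - f)/2) * (f / (r + w/2))` to the ground vehicle step
distance `d_gv = r * f / (r + w/2)` is at most `2 w / f`. -/
theorem uav_to_gv_step_ratio_le (w f r : ℝ)
    (hf : 0 < f) (hfw : f < w) (hr : w / 2 ≤ r) :
    ((w - f) + (r + (w - f) / 2) * (f / (r + w / 2))) / (r * f / (r + w / 2))
      ≤ 2 * w / f := by
  have hw : 0 < w := hf.trans hfw
  have hrpos : 0 < r := lt_of_lt_of_le (by linarith) hr
  have hs : 0 < r + w / 2 := by linarith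
  rw [div_le_div_iff₀ (by positivity) hf]
  have key : (w - f) * (r + w / 2) + (r + (w - f) / 2) * f ≤ 2 * w * r := by
    nlinarith [sq_nonneg f]
  have expand : ((w - f) + (r + (w - f) / 2) * (f / (r + w / 2))) * f
      = ((w - f) * (r + w / 2) + (r + (w - f) / 2) * f) * f / (r + w / 2) := by
    field_simp
  rw [expand]
  rw [div_le_iff₀ hs] at *
  calc ((w - f) * (r + w / 2) + (r + (w - f) / 2) * f) * f
      ≤ 2 * w * r * f := by nlinarith
    _ = 2 * w * (r * f / (r + w / 2)) * (r + w / 2) := by field_simp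
end

section
/- For the optimal lawn mower plan on a straight path, one period consisting of two traversals of length w − f and two transits of length f covers a ground vehicle advance of 2f, and the resulting distance ratio (2(w − f) + 2f)/(2f) equals exactly w/f; hence the straight-path lawn mower plan achieves the lower bound w/f and is optimal. -/
/-- For the lawn mower plan on a straight path, one period consists of two
traversals of length `w - f` and two transits of length `f` while the ground vehicle
advances `2 f`; the resulting distance ratio `(2(w - f) + 2 f) / (2 f)` equals `w / f`
exactly, hence the straight-path lawn mower plan achieves the lower bound `w / f`
(any plan of length `L` covering demand `w * d`, i.e. with `L * f ≥ w * d`, has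
ratio `L / d ≥ w / f`) and is optimal. -/
theorem straight_lawn_mower_optimal (w f : ℝ) (hf : 0 < f) (hfw : f < w) :
    (2 * (w - f) + 2 * f) / (2 * f) = w / f ∧
    (∀ L d : ℝ, 0 < d → L * f ≥ w * d → L / d ≥ w / f) := by
  constructor
  · field_simp
    ring
  · intro L d hd hL
    rw [ge_iff_le, div_le_div_iff₀ hf hd]
    nlinarith
end

section
/- If the UAV velocity satisfies v_uav ≥ 2(w/f)·v_gv, then for every r ≥ w/2 the time for the UAV to complete one conformal lawn mower step (distance at most w) is at most the time for the ground vehicle to traverse the corresponding centre-line distance r·f/(r + w/2). Hence the UAV never falls behind the deadline. -/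
/-- If the UAV velocity satisfies `v_uav ≥ 2 (w/f) v_gv`, then for every
centre-line radius `r ≥ w/2`, the time for the UAV to complete one conformal lawn
mower step of distance at most `w` is at most the time for the ground vehicle to
traverse the corresponding centre-line distance `r f / (r + w/2)`:
`w / v_uav ≤ (r f / (r + w/2)) / v_gv`.  Hence the UAV never falls behind. -/
theorem uav_keeps_up (w f vgv vuav : ℝ)
    (hf : 0 < f) (hfw : f < w) (hvgv : 0 < vgv)
    (hv : vuav ≥ 2 * (w / f) * vgv) :
    ∀ r : ℝ, w / 2 ≤ r → w / vuav ≤ (r * f / (r + w / 2)) / vgv := by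
  intro r hr
  have hw : 0 < w := hf.trans hfw
  have hvu : 0 < vuav := lt_of_lt_of_le (by positivity) hv
  have hrw : 0 < r + w / 2 := by nlinarith
  -- step 1: w / vuav ≤ f / (2 * vgv)
  have h1 : w / vuav ≤ f / (2 * vgv) := by
    rw [div_le_div_iff₀ hvu (by positivity)]
    have hwf : w / f * f = w := div_mul_cancel₀ _ hf.ne'
    nlinarith [mul_le_mul_of_nonneg_right hv hf.le]
  -- step 2: f / 2 ≤ r * f / (r + w / 2)
  have h2 : f / (2 * vgv) ≤ (r * f / (r + w / 2)) / vgv := by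
    rw [div_le_div_iff₀ (by positivity) hvgv, div_mul_eq_mul_div,
      le_div_iff₀ hrw]
    nlinarith [mul_nonneg (mul_nonneg hf.le hvgv.le) (sub_nonneg.2 hr)]
  exact h1.trans h2
end

section
/- In the conformal lawn mower plan, consecutive traversals are placed so that corresponding endpoints are at distance exactly f apart; since the footprint is an f × f square and traversals span the full width w, the union of the swept footprint regions along two consecutive traversals contains the entire corridor region between them. By induction, the plan covers the entire swept area of the path. -/
/-- In the conformal lawn mower plan the corridor is parameterized by
arc length `s` and offset `u ∈ [-w/2, w/2]`.  Traversals are full-width segments at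
monotone arc-length positions `s 0 = 0, s 1, s 2, ...` with consecutive gaps at most
`f`.  Then every corridor point up to `s n` lies within arc-length distance `f/2` of
some traversal, and hence the union of the swept `f × f` footprint regions along the
first `n + 1` traversals contains the entire corridor region up to `s n`. -/
theorem conformal_plan_complete_coverage (w f : ℝ) (hf : 0 < f) (hfw : f < w)
    (s : ℕ → ℝ) (hmono : Monotone s) (h0 : s 0 = 0)
    (hgap : ∀ i : ℕ, s (i + 1) - s i ≤ f) (n : ℕ) :
    (∀ x ∈ Set.Icc (0 : ℝ) (s n), ∃ i ≤ n, |x - s i| ≤ f / 2) ∧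
    Set.Icc (0 : ℝ) (s n) ×ˢ Set.Icc (-(w / 2)) (w / 2) ⊆
      ⋃ i ∈ Finset.range (n + 1),
        Set.Icc (s i - f / 2) (s i + f / 2) ×ˢ Set.Icc (-(w / 2)) (w / 2) := by
  have key : ∀ x ∈ Set.Icc (0 : ℝ) (s n), ∃ i ≤ n, |x - s i| ≤ f / 2 := by
    induction n with
    | zero =>
      intro x hx
      refine ⟨0, le_refl _, ?_⟩
      have : x = 0 := le_antisymm (h0 ▸ hx.2) hx.1
      rw [this, h0]
      simp [abs_of_nonneg, le_of_lt hf, hf.le]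
      positivity
    | succ m ih =>
      intro x hx
      rcases le_or_gt x (s m) with h | h
      · obtain ⟨i, hi, hy⟩ := ih x ⟨hx.1, h⟩
        exact ⟨i, hi.trans (Nat.le_succ m), hy⟩
      · rcases le_or_gt (x - s m) (f / 2) with h2 | h2
        · exact ⟨m, Nat.le_succ m, by rw [abs_of_pos (by linarith)]; exact h2⟩
        · refine ⟨m + 1, le_refl _, ?_⟩
          have hg := hgap m
          have hx2 := hx.2
          rw [abs_le]
          constructor <;> linarith
  refine ⟨key, ?_⟩
  rintro ⟨x, u⟩ ⟨hx, hu⟩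
  obtain ⟨i, hi, habs⟩ := key x hx
  rw [abs_le] at habs
  refine Set.mem_iUnion.mpr ⟨i, Set.mem_iUnion.mpr ⟨Finset.mem_range.mpr (Nat.lt_succ_of_le hi), ?_⟩⟩
  exact ⟨⟨by linarith [habs.1], by linarith [habs.2]⟩, hu⟩
end
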